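/- (Per-multipole LASSO error bounds.) Let M ≥ 1 and p ≥ 1 be integers, X a real M×p matrix, φ ∈ ℝ^p with at most q nonzero entries, E ∈ ℝ^M, and Y = Xφ + E. Set Γ̂ = XᵀX/M. For a penalty parameter λ > 0, let φ̂ ∈ ℝ^p be any minimizer over β ∈ ℝ^p of (1/M)‖Y − Xβ‖₂² + λ‖β‖₁, and set v = φ̂ − φ. Suppose ‖XᵀE/M‖_∞ ≤ λ/4, and suppose Γ̂ satisfies the restricted eigenvalue condition RE(α, τ) with q·τ ≤ α/32. Then: (i) ‖v‖₂ ≤ 12√q·λ/α; (ii) ‖v‖₁ ≤ 48·q·λ/α; and (iii) vᵀΓ̂v ≤ 72·q·λ²/α. -/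

import Mathlib

/-!
Comparing the objective at `φ̂` and at `φ` gives the basic inequality
`vᵀΓ̂v ≤ 2⟨XᵀE/M, v⟩ + λ(‖φ‖₁ − ‖φ + v‖₁)`. Bounding the noise term by Hölder and splitting
`‖v‖₁` along the support `S` of `φ` shows that `v` lies in the cone `‖v_{Sᶜ}‖₁ ≤ 3‖v_S‖₁`, so
`‖v‖₁ ≤ 4‖v_S‖₁ ≤ 4√q‖v‖₂` by Cauchy–Schwarz. On this cone, `RE(α, τ)` with `16qτ ≤ α/2`
gives the curvature `vᵀΓ̂v ≥ (α/2)‖v‖₂²`, while the basic inequality gives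
`vᵀΓ̂v ≤ (3/2)λ√q‖v‖₂`; comparing the two bounds `‖v‖₂`, and then the other two quantities.
-/

open Matrix Real

/-- The ℓ¹ norm on `Fin p → ℝ`. -/
noncomputable def l1 {p : ℕ} (v : Fin p → ℝ) : ℝ := ∑ i, |v i|

/-- The ℓ² (Euclidean) norm on `Fin n → ℝ`. -/
noncomputable def l2 {n : ℕ} (v : Fin n → ℝ) : ℝ := Real.sqrt (∑ i, (v i) ^ 2)

/-- The ℓ∞ norm on `Fin p → ℝ`. -/
noncomputable def linf {p : ℕ} (v : Fin p → ℝ) : ℝ := ⨆ i, |v i|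

/-- The restricted eigenvalue condition `RE(α, τ)`:
`θᵀAθ ≥ α‖θ‖₂² − τ‖θ‖₁²` for every `θ ∈ ℝ^p`. -/
def RECond {p : ℕ} (A : Matrix (Fin p) (Fin p) ℝ) (α τ : ℝ) : Prop :=
  ∀ θ : Fin p → ℝ, α * (l2 θ) ^ 2 - τ * (l1 θ) ^ 2 ≤ θ ⬝ᵥ (A *ᵥ θ)

open Finset

section Norms

variable {n : ℕ}

lemma l1_nonneg (v : Fin n → ℝ) : 0 ≤ l1 v :=
  sum_nonneg fun _ _ => abs_nonneg _

lemma l2_nonneg (v : Fin n → ℝ) : 0 ≤ l2 v :=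
  Real.sqrt_nonneg _

lemma sq_l2 (v : Fin n → ℝ) : l2 v ^ 2 = ∑ i, v i ^ 2 :=
  Real.sq_sqrt (sum_nonneg fun _ _ => sq_nonneg _)

lemma l1_eq_sum_add_sum_compl (v : Fin n → ℝ) (S : Finset (Fin n)) :
    l1 v = ∑ i ∈ S, |v i| + ∑ i ∈ Sᶜ, |v i| :=
  (sum_add_sum_compl S _).symm

lemma abs_le_linf (w : Fin n → ℝ) (i : Fin n) : |w i| ≤ linf w :=
  le_ciSup (f := fun j => |w j|) (Set.finite_range _).bddAbove i

lemma dotProduct_le_linf_mul_l1 (w z : Fin n → ℝ) : w ⬝ᵥ z ≤ linf w * l1 z := by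
  rw [l1, mul_sum]
  refine sum_le_sum fun i _ => ?_
  calc w i * z i ≤ |w i| * |z i| := (le_abs_self _).trans_eq (abs_mul _ _)
    _ ≤ linf w * |z i| := mul_le_mul_of_nonneg_right (abs_le_linf w i) (abs_nonneg _)

lemma sum_abs_le_sqrt_card_mul_l2 (v : Fin n → ℝ) (S : Finset (Fin n)) :
    ∑ i ∈ S, |v i| ≤ √(#S : ℝ) * l2 v := by
  have hS : ∑ i ∈ S, v i ^ 2 ≤ l2 v ^ 2 := by
    rw [sq_l2]
    exact sum_le_sum_of_subset_of_nonneg (subset_univ S) fun i _ _ => sq_nonneg _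
  rw [← Real.sqrt_sq (l2_nonneg v), ← Real.sqrt_mul (Nat.cast_nonneg _),
    Real.le_sqrt (sum_nonneg fun _ _ => abs_nonneg _) (by positivity)]
  calc (∑ i ∈ S, |v i|) ^ 2 ≤ #S * ∑ i ∈ S, |v i| ^ 2 := sq_sum_le_card_mul_sum_sq
    _ = #S * ∑ i ∈ S, v i ^ 2 := by simp only [sq_abs]
    _ ≤ #S * l2 v ^ 2 := by gcongr

lemma l1_sub_l1_add_le {φ : Fin n → ℝ} {S : Finset (Fin n)} (hφ : ∀ i ∉ S, φ i = 0)
    (v : Fin n → ℝ) : l1 φ - l1 (φ + v) ≤ ∑ i ∈ S, |v i| - ∑ i ∈ Sᶜ, |v i| := by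
  have hφSc : ∑ i ∈ Sᶜ, |φ i| = 0 :=
    sum_eq_zero fun i hi => by simp [hφ i (mem_compl.1 hi)]
  have hvSc : ∑ i ∈ Sᶜ, |(φ + v) i| = ∑ i ∈ Sᶜ, |v i| :=
    sum_congr rfl fun i hi => by simp [hφ i (mem_compl.1 hi)]
  have hvS : ∑ i ∈ S, |φ i| - ∑ i ∈ S, |(φ + v) i| ≤ ∑ i ∈ S, |v i| := by
    rw [← sum_sub_distrib]
    exact sum_le_sum fun i _ => by
      simpa using abs_sub_abs_le_abs_sub (φ i) (φ i + v i)
  rw [l1_eq_sum_add_sum_compl φ S, l1_eq_sum_add_sum_compl (φ + v) S]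
  linarith

end Norms

lemma dotProduct_smul_gram_mulVec {m n : Type*} [Fintype m] [Fintype n] (c : ℝ) (X : Matrix m n ℝ) (v : n → ℝ) :
    v ⬝ᵥ ((c • (Xᵀ * X)) *ᵥ v) = c * ∑ i, (X *ᵥ v) i ^ 2 := by
  rw [smul_mulVec, dotProduct_smul, smul_eq_mul, ← mulVec_mulVec, dotProduct_mulVec,
    vecMul_transpose]
  simp only [dotProduct, sq]

lemma lasso_basic_inequality {m n : ℕ} {X : Matrix (Fin m) (Fin n) ℝ} {φ φhat : Fin n → ℝ}
    {E Y : Fin m → ℝ} (hY : Y = X *ᵥ φ + E) {c lam : ℝ}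
    (hmin : c * (∑ i, (Y i - (X *ᵥ φhat) i) ^ 2) + lam * l1 φhat
      ≤ c * (∑ i, (Y i - (X *ᵥ φ) i) ^ 2) + lam * l1 φ) :
    (φhat - φ) ⬝ᵥ ((c • (Xᵀ * X)) *ᵥ (φhat - φ))
      ≤ 2 * ((c • (Xᵀ *ᵥ E)) ⬝ᵥ (φhat - φ)) + lam * (l1 φ - l1 φhat) := by
  set u := X *ᵥ (φhat - φ)
  have hfit : ∑ i, (Y i - (X *ᵥ φhat) i) ^ 2
      = ∑ i, E i ^ 2 - 2 * ∑ i, E i * u i + ∑ i, u i ^ 2 := by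
    rw [mul_sum, ← sum_sub_distrib, ← sum_add_distrib]
    refine sum_congr rfl fun i _ => ?_
    simp only [hY, u, mulVec_sub, Pi.add_apply, Pi.sub_apply]
    ring
  have hnoise : ∑ i, (Y i - (X *ᵥ φ) i) ^ 2 = ∑ i, E i ^ 2 := by
    simp [hY]
  have hcross : (c • (Xᵀ *ᵥ E)) ⬝ᵥ (φhat - φ) = c * ∑ i, E i * u i := by
    rw [smul_dotProduct, smul_eq_mul, mulVec_transpose, ← dotProduct_mulVec]
    rfl
  rw [hfit, hnoise] at hmin
  rw [dotProduct_smul_gram_mulVec, hcross]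
  linear_combination hmin

lemma lasso_cone {n : ℕ} {S : Finset (Fin n)} {φ v w : Fin n → ℝ} {T lam : ℝ}
    (hφ : ∀ i ∉ S, φ i = 0) (hlam : 0 < lam) (hT0 : 0 ≤ T)
    (hT : T ≤ 2 * (w ⬝ᵥ v) + lam * (l1 φ - l1 (φ + v))) (hw : linf w ≤ lam / 4) :
    T ≤ 3 / 2 * lam * ∑ i ∈ S, |v i| ∧ l1 v ≤ 4 * ∑ i ∈ S, |v i| := by
  have hsplit := l1_eq_sum_add_sum_compl v S
  have hnoise : w ⬝ᵥ v ≤ lam / 4 * l1 v :=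
    (dotProduct_le_linf_mul_l1 w v).trans (mul_le_mul_of_nonneg_right hw (l1_nonneg v))
  have hpen := mul_le_mul_of_nonneg_left (l1_sub_l1_add_le hφ v) hlam.le
  rw [hsplit] at hnoise
  have hcone : T ≤ 3 / 2 * lam * ∑ i ∈ S, |v i| - 1 / 2 * lam * ∑ i ∈ Sᶜ, |v i| := by
    linarith
  have hSc : 0 ≤ ∑ i ∈ Sᶜ, |v i| := sum_nonneg fun _ _ => abs_nonneg _
  refine ⟨by linarith [mul_nonneg hlam.le hSc], ?_⟩
  have : lam * ∑ i ∈ Sᶜ, |v i| ≤ lam * (3 * ∑ i ∈ S, |v i|) := by linarith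
  linarith [le_of_mul_le_mul_left this hlam]

lemma RECond.half_curvature {n : ℕ} {A : Matrix (Fin n) (Fin n) ℝ} {α τ : ℝ}
    (hRE : RECond A α τ) (hτ : 0 ≤ τ) {v : Fin n → ℝ} {K : ℝ} (hv : l1 v ≤ K * l2 v)
    (hK : τ * K ^ 2 ≤ α / 2) : α / 2 * l2 v ^ 2 ≤ v ⬝ᵥ (A *ᵥ v) := by
  have hl1 : l1 v ^ 2 ≤ K ^ 2 * l2 v ^ 2 := by
    rw [← mul_pow]; exact pow_le_pow_left₀ (l1_nonneg v) hv 2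
  have := hRE v
  linarith [mul_le_mul_of_nonneg_left hl1 hτ, mul_le_mul_of_nonneg_right hK (sq_nonneg (l2 v))]

lemma lasso_bounds_of_cone_of_curvature {T a L l lam α q : ℝ} (hlam : 0 < lam) (hα : 0 < α)
    (hq : 0 ≤ q) (hL0 : 0 ≤ L) (hTa : T ≤ 3 / 2 * lam * a) (hla : l ≤ 4 * a)
    (haL : a ≤ √q * L) (hcurv : α / 2 * L ^ 2 ≤ T) :
    L ≤ 3 * √q * lam / α ∧ l ≤ 12 * q * lam / α ∧ T ≤ 9 / 2 * q * lam ^ 2 / α := by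
  have hL : L ≤ 3 * √q * lam / α := by
    have hquad : α * L * L ≤ 3 * √q * lam * L := by
      nlinarith [mul_le_mul_of_nonneg_left haL (by positivity : (0 : ℝ) ≤ 3 / 2 * lam)]
    rw [le_div_iff₀ hα]
    rcases hL0.eq_or_lt with h0 | hpos
    · rw [← h0, zero_mul]; positivity
    · linarith [le_of_mul_le_mul_right hquad hpos]
  have ha : a ≤ 3 * q * lam / α :=
    calc a ≤ √q * (3 * √q * lam / α) := haL.trans (by gcongr)
      _ = 3 * (√q * √q) * lam / α := by ring
      _ = 3 * q * lam / α := by rw [Real.mul_self_sqrt hq]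
  refine ⟨hL, ?_, ?_⟩
  · calc l ≤ 4 * (3 * q * lam / α) := by linarith
      _ = 12 * q * lam / α := by ring
  · calc T ≤ 3 / 2 * lam * (3 * q * lam / α) :=
          hTa.trans (mul_le_mul_of_nonneg_left ha (by positivity))
      _ = 9 / 2 * q * lam ^ 2 / α := by ring

theorem lasso_error_bounds_general (M p : ℕ)
    (X : Matrix (Fin M) (Fin p) ℝ) (φ : Fin p → ℝ) (E : Fin M → ℝ)
    (q : ℕ) (hsparse : (Finset.univ.filter (fun i => φ i ≠ 0)).card ≤ q)
    (Y : Fin M → ℝ) (hY : Y = X *ᵥ φ + E)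
    (Γhat : Matrix (Fin p) (Fin p) ℝ) (hΓ : Γhat = (M : ℝ)⁻¹ • (Xᵀ * X))
    (lam : ℝ) (hlam : 0 < lam)
    (φhat : Fin p → ℝ)
    (hmin : ∀ β : Fin p → ℝ,
      (M : ℝ)⁻¹ * (∑ i, (Y i - (X *ᵥ φhat) i) ^ 2) + lam * l1 φhat
        ≤ (M : ℝ)⁻¹ * (∑ i, (Y i - (X *ᵥ β) i) ^ 2) + lam * l1 β)
    (v : Fin p → ℝ) (hv : v = φhat - φ)
    (hdev : linf ((M : ℝ)⁻¹ • (Xᵀ *ᵥ E)) ≤ lam / 4)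
    (α τ : ℝ) (hα : 0 < α) (hτ : 0 < τ)
    (hRE : RECond Γhat α τ) (hqτ : (q : ℝ) * τ ≤ α / 32) :
    l2 v ≤ 12 * Real.sqrt q * lam / α ∧
    l1 v ≤ 48 * q * lam / α ∧
    v ⬝ᵥ (Γhat *ᵥ v) ≤ 72 * q * lam ^ 2 / α := by
  set S := univ.filter (fun i => φ i ≠ 0)
  have hφS : ∀ i ∉ S, φ i = 0 := by simp [S]
  have hφhat : φhat = φ + v := by rw [hv, add_sub_cancel]
  have hbasic := lasso_basic_inequality hY (hmin φ)
  rw [← hv, ← hΓ, hφhat] at hbasic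
  have hT0 : 0 ≤ v ⬝ᵥ (Γhat *ᵥ v) := by
    rw [hΓ, dotProduct_smul_gram_mulVec]; positivity
  obtain ⟨hTS, hl1S⟩ := lasso_cone hφS hlam hT0 hbasic hdev
  have hq : (0 : ℝ) ≤ q := q.cast_nonneg
  have hSL : ∑ i ∈ S, |v i| ≤ √q * l2 v :=
    (sum_abs_le_sqrt_card_mul_l2 v S).trans
      (mul_le_mul_of_nonneg_right (Real.sqrt_le_sqrt (by exact_mod_cast hsparse)) (l2_nonneg v))
  have hcurv := hRE.half_curvature hτ.le (K := 4 * √q) (by linarith)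
    (by rw [mul_pow, Real.sq_sqrt hq]; linarith)
  obtain ⟨hL, hl1, hT⟩ :=
    lasso_bounds_of_cone_of_curvature hlam hα hq (l2_nonneg v) hTS hl1S hSL hcurv
  refine ⟨hL.trans (by gcongr; norm_num), hl1.trans (by gcongr; norm_num),
    hT.trans (by gcongr; norm_num)⟩

/-- **Per-multipole LASSO error bounds.** Under the deviation condition
`‖XᵀE/M‖_∞ ≤ λ/4` and the restricted eigenvalue condition `RE(α, τ)` for
`Γ̂ = XᵀX/M` with `q·τ ≤ α/32`, any LASSO solution `φ̂` satisfies, with `v = φ̂ − φ`: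
(i) `‖v‖₂ ≤ 12√q·λ/α`; (ii) `‖v‖₁ ≤ 48qλ/α`; (iii) `vᵀΓ̂v ≤ 72qλ²/α`. -/
theorem lasso_error_bounds (M p : ℕ) (hM : 1 ≤ M) (hp : 1 ≤ p)
    (X : Matrix (Fin M) (Fin p) ℝ) (φ : Fin p → ℝ) (E : Fin M → ℝ)
    (q : ℕ) (hsparse : (Finset.univ.filter (fun i => φ i ≠ 0)).card ≤ q)
    (Y : Fin M → ℝ) (hY : Y = X *ᵥ φ + E)
    (Γhat : Matrix (Fin p) (Fin p) ℝ) (hΓ : Γhat = (M : ℝ)⁻¹ • (Xᵀ * X))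
    (lam : ℝ) (hlam : 0 < lam)
    (φhat : Fin p → ℝ)
    (hmin : ∀ β : Fin p → ℝ,
      (M : ℝ)⁻¹ * (∑ i, (Y i - (X *ᵥ φhat) i) ^ 2) + lam * l1 φhat
        ≤ (M : ℝ)⁻¹ * (∑ i, (Y i - (X *ᵥ β) i) ^ 2) + lam * l1 β)
    (v : Fin p → ℝ) (hv : v = φhat - φ)
    (hdev : linf ((M : ℝ)⁻¹ • (Xᵀ *ᵥ E)) ≤ lam / 4)
    (α τ : ℝ) (hα : 0 < α) (hτ : 0 < τ)
    (hRE : RECond Γhat α τ) (hqτ : (q : ℝ) * τ ≤ α / 32) :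
    l2 v ≤ 12 * Real.sqrt q * lam / α ∧
    l1 v ≤ 48 * q * lam / α ∧
    v ⬝ᵥ (Γhat *ᵥ v) ≤ 72 * q * lam ^ 2 / α :=
  lasso_error_bounds_general M p X φ E q hsparse Y hY Γhat hΓ lam hlam φhat hmin v hv hdev α τ hα hτ
    hRE hqτ
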